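/- arXiv:0809.2926 — 3 statements merged into one kernel-verified Lean document; each statement's English description precedes it below -/
import Mathlib

section
/- Let D be a finite abelian group and ε ∈ D an element of order exactly 2. Then for any two distinct elements g₁ ≠ g₂ of D there exists a group homomorphism χ : D → ℂˣ with χ(ε) = −1 and χ(g₁) ≠ χ(g₂). -/
/-- Characters `χ : D → ℂˣ` with `χ(ε) = −1` separate the points of a finite abelian
group `D` containing an element `ε` of order exactly `2`. -/
theorem stmt3 {D : Type*} [CommGroup D] [Fintype D] (ε : D) (hε : orderOf ε = 2)
    (g₁ g₂ : D) (hg : g₁ ≠ g₂) :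
    ∃ χ : D →* ℂˣ, χ ε = -1 ∧ χ g₁ ≠ χ g₂ := by
  have key : ∀ a : D, a ≠ 1 → ∃ φ : D →* ℂˣ, φ a ≠ 1 := fun a ha ↦
    CommGroup.exists_apply_ne_one_of_hasEnoughRootsOfUnity D ℂ ha
  have hsq : ∀ φ : D →* ℂˣ, φ ε ≠ 1 → φ ε = -1 := by
    intro φ h
    have h2 : ((φ ε : ℂˣ) : ℂ) ^ 2 = 1 := by
      rw [← Units.val_pow_eq_pow_val, ← map_pow, ← hε, pow_orderOf_eq_one, map_one,
        Units.val_one]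
    rcases sq_eq_one_iff.mp h2 with h1 | h1
    · exact absurd (Units.ext h1) h
    · exact Units.ext (by rw [h1]; simp)
  have hεne : ε ≠ 1 := by
    intro h; rw [h, orderOf_one] at hε; omega
  obtain ⟨χ₀, hχ₀⟩ := key ε hεne
  have hχ₀ε : χ₀ ε = -1 := hsq χ₀ hχ₀
  have hψne : ∀ φ : D →* ℂˣ, φ (g₁ * g₂⁻¹) ≠ 1 → φ g₁ ≠ φ g₂ := by
    intro φ h heq
    apply h
    rw [map_mul, map_inv, heq, mul_inv_cancel]
  by_cases hc : χ₀ (g₁ * g₂⁻¹) ≠ 1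
  · exact ⟨χ₀, hχ₀ε, hψne χ₀ hc⟩
  push_neg at hc
  obtain ⟨ψ, hψ⟩ := key (g₁ * g₂⁻¹) (fun h ↦ hg (mul_inv_eq_one.mp h))
  by_cases hψε : ψ ε = 1
  · refine ⟨χ₀ * ψ, ?_, hψne _ ?_⟩
    · simp [hχ₀ε, hψε]
    · simpa [MonoidHom.mul_apply, hc] using hψ
  · exact ⟨ψ, hsq ψ hψε, hψne ψ hψ⟩
end

section
/- Let K be a field and let B ⊆ SL₂(K) be the subgroup of upper-triangular matrices and w = [[0,1],[−1,0]]. Then SL₂(K) is the disjoint union of B and B·w·U, where U is the group of upper unitriangular matrices; moreover the product map B × {w} × U → B·w·U, (b, w, u) ↦ b·w·u, is a bijection. -/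
/-- Bruhat decomposition for `SL₂(K)`: with `B` the upper-triangular subgroup,
`U` the upper unitriangular subgroup and `w = [[0,1],[−1,0]]`, the group `SL₂(K)`
is the disjoint union of `B` and `B·w·U`, with uniqueness of the factorization. -/
theorem stmt17 (K : Type*) [Field K] :
    let w : Matrix (Fin 2) (Fin 2) K := !![0, 1; -1, 0]
    let B : Set (Matrix (Fin 2) (Fin 2) K) := {m | m.det = 1 ∧ m 1 0 = 0}
    let U : Set (Matrix (Fin 2) (Fin 2) K) := {m | m 0 0 = 1 ∧ m 1 1 = 1 ∧ m 1 0 = 0}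
    (∀ m : Matrix (Fin 2) (Fin 2) K,
        m.det = 1 ↔ (m ∈ B ∨ ∃ b ∈ B, ∃ u ∈ U, m = b * w * u))
    ∧ (∀ m ∈ B, ¬ ∃ b ∈ B, ∃ u ∈ U, m = b * w * u)
    ∧ (∀ b ∈ B, ∀ b' ∈ B, ∀ u ∈ U, ∀ u' ∈ U,
        b * w * u = b' * w * u' → b = b' ∧ u = u') := by
  intro w B U
  have key : ∀ b u : Matrix (Fin 2) (Fin 2) K, b 1 0 = 0 → u 0 0 = 1 → u 1 1 = 1 →
      u 1 0 = 0 →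
      b * w * u = !![- b 0 1, b 0 0 - b 0 1 * u 0 1; - b 1 1, - b 1 1 * u 0 1] := by
    intro b u hb hu0 hu1 hu2
    ext i j
    fin_cases i <;> fin_cases j <;>
      simp [w, Matrix.mul_apply, Fin.sum_univ_two, hb, hu0, hu1, hu2] <;> ring
  refine ⟨?_, ?_, ?_⟩
  · intro m
    constructor
    · intro hdet
      obtain ⟨a, bb, c, d, rfl⟩ : ∃ a bb c d, m = !![a, bb; c, d] :=
        ⟨_, _, _, _, Matrix.eta_fin_two m⟩
      rw [Matrix.det_fin_two_of] at hdet
      by_cases hc : c = 0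
      · exact Or.inl ⟨by rw [Matrix.det_fin_two_of]; exact hdet, by simp [hc]⟩
      · refine Or.inr ⟨!![-c⁻¹, -a; 0, -c], ⟨?_, ?_⟩,
          !![1, d / c; 0, 1], ⟨by simp, by simp, by simp⟩, ?_⟩
        · simp [Matrix.det_fin_two_of]
          field_simp
        · simp
        · rw [key _ _ (by simp) (by simp) (by simp) (by simp)]
          ext i j
          fin_cases i <;> fin_cases j <;> simp <;> field_simp <;> linear_combination -hdet
    · rintro (⟨h, _⟩ | ⟨b, ⟨hb, hb10⟩, u, ⟨hu0, hu1, hu2⟩, rfl⟩)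
      · exact h
      · rw [Matrix.det_mul, Matrix.det_mul, hb]
        have : w.det = 1 := by simp [w, Matrix.det_fin_two_of]
        rw [this]
        rw [Matrix.det_fin_two, hu0, hu1, hu2]
        ring
  · rintro m ⟨hdet, h10⟩ ⟨b, ⟨hb, hb10⟩, u, ⟨hu0, hu1, hu2⟩, rfl⟩
    rw [key _ _ hb10 hu0 hu1 hu2] at h10 hdet
    have hb11 : b 0 0 * b 1 1 = 1 := by
      rw [Matrix.det_fin_two, hb10] at hb; linear_combination hb
    simp at h10
    rw [h10] at hb11
    simp at hb11
  · rintro b ⟨hb, hb10⟩ b' ⟨hb', hb'10⟩ u ⟨hu0, hu1, hu2⟩ u' ⟨hu'0, hu'1, hu'2⟩ heq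
    rw [key _ _ hb10 hu0 hu1 hu2, key _ _ hb'10 hu'0 hu'1 hu'2] at heq
    have e01 : b 0 1 = b' 0 1 := by
      have := congrFun (congrFun heq 0) 0; simpa using this
    have e11 : b 1 1 = b' 1 1 := by
      have := congrFun (congrFun heq 1) 0; simpa using this
    have hb11ne : b 1 1 ≠ 0 := by
      rw [Matrix.det_fin_two, hb10] at hb
      intro h; rw [h] at hb; simp at hb
    have eu : u 0 1 = u' 0 1 := by
      have h := congrFun (congrFun heq 1) 1
      simp [← e11] at h
      rcases h with h | h
      · exact h
      · exact absurd h hb11ne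
    have e00 : b 0 0 = b' 0 0 := by
      have h := congrFun (congrFun heq 0) 1
      simp [← e01, ← eu] at h
      exact h
    constructor
    · ext i j; fin_cases i <;> fin_cases j <;>
        simp [e00, e01, e11, hb10, hb'10]
    · ext i j; fin_cases i <;> fin_cases j <;>
        simp [hu0, hu1, hu2, hu'0, hu'1, hu'2, eu]
end

section
/- Let W be a finite group equipped with a function N : W → ℕ, let ℓ, M ∈ ℕ, let D be a finite abelian group of cardinality n, and set q = n + 1. Then the set X = (∐_{Y⊆F} D^Y) × ∐_{w∈W} ((D^ℓ × {w}) × (∐_{Z⊆F_w} D^Z)), where F is a set of cardinality M and F_w a set of cardinality N(w), has cardinality q^M · n^ℓ · ∑_{w∈W} q^{N(w)} = (q−1)^ℓ · q^M · ∑_{w∈W} q^{N(w)}. -/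
lemma aux_card (F D : Type*) [Fintype F] [Fintype D] :
    Nat.card ((Y : Finset F) × ({x // x ∈ Y} → D)) =
      (Nat.card D + 1) ^ (Nat.card F) := by
  classical
  simp only [Nat.card_eq_fintype_card, Fintype.card_sigma, Fintype.card_fun,
    Fintype.card_coe]
  have := Fintype.sum_pow_mul_eq_add_pow F (Fintype.card D) 1
  simpa using this

/-- Counting points of the graded set
`𝔸^{Φ⁺}(D) × ∐_{w∈W} (p⁻¹(w) × 𝔸^{Φ_w}(D))` attached to a Chevalley group:
with `|D| = n` and `q = n+1`, its cardinality is
`q^M · n^ℓ · ∑_{w∈W} q^{N(w)} = (q−1)^ℓ · q^M · ∑_{w∈W} q^{N(w)}`. -/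
theorem stmt18 {W : Type*} [Group W] [Fintype W] (N : W → ℕ) (ℓ M : ℕ)
    {D : Type*} [CommGroup D] [Fintype D]
    {F : Type*} [Fintype F] (hF : Nat.card F = M)
    {Fw : W → Type*} [∀ w, Fintype (Fw w)] (hFw : ∀ w, Nat.card (Fw w) = N w)
    (n q : ℕ) (hn : Nat.card D = n) (hq : q = n + 1) :
    Nat.card (((Y : Finset F) × ({x // x ∈ Y} → D)) ×
        Σ w : W, (Fin ℓ → D) × ((Z : Finset (Fw w)) × ({x // x ∈ Z} → D)))
        = q ^ M * n ^ ℓ * ∑ w : W, q ^ (N w)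
    ∧ Nat.card (((Y : Finset F) × ({x // x ∈ Y} → D)) ×
        Σ w : W, (Fin ℓ → D) × ((Z : Finset (Fw w)) × ({x // x ∈ Z} → D)))
        = (q - 1) ^ ℓ * q ^ M * ∑ w : W, q ^ (N w) := by
  classical
  have key : Nat.card (((Y : Finset F) × ({x // x ∈ Y} → D)) ×
        Σ w : W, (Fin ℓ → D) × ((Z : Finset (Fw w)) × ({x // x ∈ Z} → D)))
        = q ^ M * n ^ ℓ * ∑ w : W, q ^ (N w) := by
    rw [Nat.card_prod, aux_card, hn, hF, ← hq]
    have h2 : Nat.card (Σ w : W, (Fin ℓ → D) × ((Z : Finset (Fw w)) × ({x // x ∈ Z} → D)))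
        = n ^ ℓ * ∑ w : W, q ^ (N w) := by
      rw [Nat.card_eq_fintype_card, Fintype.card_sigma, Finset.mul_sum]
      simp only [← Nat.card_eq_fintype_card]
      refine Finset.sum_congr rfl fun w _ => ?_
      rw [Nat.card_prod, aux_card, hn, hFw, ← hq]
      congr 1
      simp [Nat.card_eq_fintype_card, ← hn]
    rw [h2, mul_assoc]
  refine ⟨key, ?_⟩
  rw [key]
  have : q - 1 = n := by omega
  rw [this]
  ring
end
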